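/- arXiv:2605.25853 — 3 statements merged into one kernel-verified Lean document; each statement's English description precedes it below -/
import Mathlib

section
/- Let c > 0 and let F : ℝ → ℝ be continuous with F(V) ≤ -(c/2)V² for all V, F(0)=0, and √(-F) locally Lipschitz. If V̄ ≤ 0 and V : [0,∞) → ℝ solves the ODE V'(y) = √(-2F(V(y))) with V(0) = V̄, then V is nondecreasing, V(y) ≤ 0 for all y, V(y) → 0 as y → ∞, and |V(y)| ≤ |V̄| e^{-√c · y} for all y ≥ 0. -/
/-!
Since `V' = √(-2F(V)) ≥ 0`, `V` is nondecreasing. The origin is an equilibrium of the locally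
Lipschitz field `√(-2F)`, so by uniqueness of solutions `V` cannot cross it and stays `≤ 0`.
There `F(V) ≤ -(c/2)V²` gives `(-V)' ≤ -√c · (-V)`, and Grönwall's inequality yields the
exponential decay, hence also `V → 0`.
-/

open Set Filter Topology

theorem ODE_solution_le_of_equilibrium {g x : ℝ → ℝ} {a p : ℝ} (hg : LocallyLipschitz g)
    (hp : g p = 0) (hx : ∀ t ≥ a, HasDerivAt x (g (x t)) t) (ha : x a ≤ p) :
    ∀ t ≥ a, x t ≤ p := by
  by_contra! ⟨t₀, ht₀, hlt⟩
  have hcont : ContinuousOn x (Icc a t₀) := fun t ht =>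
    (hx t ht.1).continuousAt.continuousWithinAt
  obtain ⟨t₁, ht₁, hxt₁⟩ := intermediate_value_Icc ht₀ hcont ⟨ha, hlt.le⟩
  have hK : IsCompact (x '' Icc t₁ t₀) :=
    isCompact_Icc.image_of_continuousOn (hcont.mono (Icc_subset_Icc_left ht₁.1))
  obtain ⟨L, hL⟩ := hg.locallyLipschitzOn.exists_lipschitzOnWith_of_compact hK
  have hconst : EqOn x (fun _ => p) (Icc t₁ t₀) :=
    ODE_solution_unique_of_mem_Icc_right (v := fun _ => g) (fun _ _ => hL)
      (hcont.mono (Icc_subset_Icc_left ht₁.1))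
      (fun t ht => (hx t (ht₁.1.trans ht.1)).hasDerivWithinAt)
      (fun t ht => mem_image_of_mem x (Ico_subset_Icc_self ht))
      continuousOn_const
      (fun t _ => by simpa only [hp] using hasDerivWithinAt_const t (Ici t) p)
      (fun _ _ => ⟨t₁, left_mem_Icc.2 ht₁.2, hxt₁⟩) hxt₁
  exact hlt.ne' (hconst ⟨ht₁.2, le_rfl⟩)

theorem le_mul_exp_of_hasDerivAt_le {f f' : ℝ → ℝ} {K a : ℝ}
    (hf : ∀ t ≥ a, HasDerivAt f (f' t) t) (bound : ∀ t ≥ a, f' t ≤ K * f t) :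
    ∀ t ≥ a, f t ≤ f a * Real.exp (K * (t - a)) := by
  intro t ht
  have hgronwall := le_gronwallBound_of_liminf_deriv_right_le (b := t) (ε := 0)
    (fun s hs => (hf s hs.1).continuousAt.continuousWithinAt)
    (fun s hs _ hr => (hf s hs.1).hasDerivWithinAt.liminf_right_slope_le hr) le_rfl
    (fun s hs => by simpa only [add_zero] using bound s hs.1) t ⟨ht, le_rfl⟩
  rwa [gronwallBound_ε0] at hgronwall

section

variable {F : ℝ → ℝ}

theorem locallyLipschitz_sqrt_neg_two_mul (hlip : LocallyLipschitz fun v => Real.sqrt (-F v)) :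
    LocallyLipschitz fun v => Real.sqrt (-2 * F v) := by
  have hsqrt : (fun v => Real.sqrt (-2 * F v)) = fun v => Real.sqrt 2 • Real.sqrt (-F v) := by
    funext v
    rw [smul_eq_mul, ← Real.sqrt_mul zero_le_two, neg_mul, mul_neg]
  rw [hsqrt]
  exact (lipschitzWith_smul (Real.sqrt 2)).locallyLipschitz.comp hlip

theorem sqrt_mul_abs_le_sqrt_neg_two_mul {c : ℝ} (hFle : ∀ v, F v ≤ -(c / 2) * v ^ 2) (v : ℝ) :
    Real.sqrt c * |v| ≤ Real.sqrt (-2 * F v) := by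
  rw [← Real.sqrt_sq_eq_abs, ← Real.sqrt_mul' c (sq_nonneg v)]
  exact Real.sqrt_le_sqrt (by linarith [hFle v])

end

theorem stmt1_general (c : ℝ) (hc : 0 < c) (F : ℝ → ℝ)
    (hF0 : F 0 = 0) (hFle : ∀ V, F V ≤ -(c/2) * V^2)
    (hlip : LocallyLipschitz (fun V => Real.sqrt (-F V)))
    (Vb : ℝ) (hVb : Vb ≤ 0) (V : ℝ → ℝ)
    (hode : ∀ y ≥ (0:ℝ), HasDerivAt V (Real.sqrt (-2 * F (V y))) y)
    (hinit : V 0 = Vb) :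
    MonotoneOn V (Set.Ici 0) ∧ (∀ y ≥ (0:ℝ), V y ≤ 0) ∧
    Filter.Tendsto V Filter.atTop (nhds 0) ∧
    (∀ y ≥ (0:ℝ), |V y| ≤ |Vb| * Real.exp (-Real.sqrt c * y)) := by
  have hmono : MonotoneOn V (Ici 0) :=
    monotoneOn_of_hasDerivWithinAt_nonneg (convex_Ici 0)
      (fun y hy => (hode y hy).continuousAt.continuousWithinAt)
      (fun y hy => (hode y (interior_subset hy)).hasDerivWithinAt)
      (fun _ _ => Real.sqrt_nonneg _)
  have hnonpos : ∀ y ≥ (0:ℝ), V y ≤ 0 :=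
    ODE_solution_le_of_equilibrium (locallyLipschitz_sqrt_neg_two_mul hlip)
      (by simp [hF0]) hode (hinit ▸ hVb)
  have hdecay : ∀ y ≥ (0:ℝ), |V y| ≤ |Vb| * Real.exp (-Real.sqrt c * y) := by
    have hneg := le_mul_exp_of_hasDerivAt_le (f := fun y => -V y) (K := -Real.sqrt c)
      (fun y hy => (hode y hy).neg) (fun y _ => by
        linarith [sqrt_mul_abs_le_sqrt_neg_two_mul hFle (V y),
          mul_le_mul_of_nonneg_left (neg_le_abs (V y)) (Real.sqrt_nonneg c)])
    intro y hy
    rw [abs_of_nonpos (hnonpos y hy), abs_of_nonpos hVb, ← hinit]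
    simpa only [sub_zero] using hneg y hy
  refine ⟨hmono, hnonpos, ?_, hdecay⟩
  have hexp : Tendsto (fun y => |Vb| * Real.exp (-Real.sqrt c * y)) atTop (𝓝 0) := by
    simpa only [mul_zero, Function.comp_apply, id] using (Real.tendsto_exp_atBot.comp
      (tendsto_id.const_mul_atTop_of_neg (neg_neg_of_pos (Real.sqrt_pos.2 hc)))).const_mul |Vb|
  exact squeeze_zero_norm' ((eventually_ge_atTop 0).mono hdecay) hexp

theorem stmt1 (c : ℝ) (hc : 0 < c) (F : ℝ → ℝ) (hFcont : Continuous F)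
    (hF0 : F 0 = 0) (hFle : ∀ V, F V ≤ -(c/2) * V^2)
    (hlip : LocallyLipschitz (fun V => Real.sqrt (-F V)))
    (Vb : ℝ) (hVb : Vb ≤ 0) (V : ℝ → ℝ)
    (hode : ∀ y ≥ (0:ℝ), HasDerivAt V (Real.sqrt (-2 * F (V y))) y)
    (hinit : V 0 = Vb) :
    MonotoneOn V (Set.Ici 0) ∧ (∀ y ≥ (0:ℝ), V y ≤ 0) ∧
    Filter.Tendsto V Filter.atTop (nhds 0) ∧
    (∀ y ≥ (0:ℝ), |V y| ≤ |Vb| * Real.exp (-Real.sqrt c * y)) :=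
  stmt1_general c hc F hF0 hFle hlip Vb hVb V hode hinit
end

section
/- Let f ∈ C¹(ℝ) with f'(u) ≤ -c < 0 for all u, and ū⁰ ∈ ℝ. If V₁, V₂ ∈ C²([0,∞)) ∩ H¹(0,∞) both satisfy f(ū⁰+Vᵢ) - f(ū⁰) + Vᵢ'' = 0 on (0,∞), Vᵢ(0) = V̄, and Vᵢ(y) → 0 as y → ∞, then V₁ ≡ V₂. (Uniqueness of the boundary layer profile.) -/
/-! A comparison principle: if `W = V₁ - V₂` had a positive value on `[0, ∞)`, then, since `W(0) ≤ 0`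
and `W → 0` at infinity, it would attain a positive interior maximum at some `y`. There
`W''(y) = f(ū⁰ + V₂ y) - f(ū⁰ + V₁ y) ≥ c W(y) > 0` because `f' ≤ -c`, contradicting `W''(y) ≤ 0` at a
maximum. Applying this to both orderings gives `V₁ = V₂`. -/

open Set Filter Topology

theorem IsLocalMax.deriv_deriv_nonpos {W : ℝ → ℝ} {x : ℝ} (hmax : IsLocalMax W x)
    (hc : ContinuousAt W x) : deriv (deriv W) x ≤ 0 := by
  by_contra! hpos
  have hmin := isLocalMin_of_deriv_deriv_pos hpos hmax.deriv_eq_zero hc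
  have hconst : W =ᶠ[𝓝 x] fun _ => W x :=
    (hmin.and hmax).mono fun y hy => le_antisymm hy.2 hy.1
  have hderiv : deriv W =ᶠ[𝓝 x] fun _ => 0 :=
    hconst.eventuallyEq_nhds.mono fun y hy => by rw [hy.deriv_eq, deriv_const]
  rw [hderiv.deriv_eq, deriv_const] at hpos
  exact lt_irrefl 0 hpos

theorem nonpos_on_Ici_of_deriv_deriv_pos {W : ℝ → ℝ} (hW : Continuous W) (h0 : W 0 ≤ 0)
    (hlim : Tendsto W atTop (𝓝 0)) (hconvex : ∀ y, 0 < y → 0 < W y → 0 < deriv (deriv W) y) :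
    ∀ y ≥ 0, W y ≤ 0 := by
  by_contra! ⟨y₀, hy₀, hWy₀⟩
  obtain ⟨R, hR⟩ := eventually_atTop.mp (hlim.eventually_lt_const hWy₀)
  have hy₀R : y₀ ≤ R := le_of_not_gt fun h => lt_irrefl _ (hR y₀ h.le)
  obtain ⟨ym, hym, hmax⟩ :=
    isCompact_Icc.exists_isMaxOn (nonempty_Icc.mpr (hy₀.trans hy₀R)) hW.continuousOn
  have hWym : W y₀ ≤ W ym := hmax ⟨hy₀, hy₀R⟩
  have hym_pos : 0 < ym := hym.1.lt_of_ne fun h => by rw [← h] at hWym; linarith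
  have hym_lt : ym < R := hym.2.lt_of_ne fun h => by have := hR R le_rfl; rw [← h] at this; linarith
  have hlocal : IsLocalMax W ym := hmax.isLocalMax (Icc_mem_nhds hym_pos hym_lt)
  exact (hlocal.deriv_deriv_nonpos hW.continuousAt).not_gt
    (hconvex ym hym_pos (hWy₀.trans_le hWym))

theorem boundaryLayer_comparison {f : ℝ → ℝ} {c : ℝ} (hc : 0 < c) (hf : Differentiable ℝ f)
    (hf' : ∀ u, deriv f u ≤ -c) (u0 : ℝ) {V₁ V₂ : ℝ → ℝ}
    (hV₁ : Differentiable ℝ V₁) (hV₁' : Differentiable ℝ (deriv V₁))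
    (hV₂ : Differentiable ℝ V₂) (hV₂' : Differentiable ℝ (deriv V₂))
    (heq1 : ∀ y ≥ (0:ℝ), f (u0 + V₁ y) - f u0 + deriv (deriv V₁) y = 0)
    (heq2 : ∀ y ≥ (0:ℝ), f (u0 + V₂ y) - f u0 + deriv (deriv V₂) y = 0)
    (hb : V₁ 0 ≤ V₂ 0) (hlim1 : Tendsto V₁ atTop (𝓝 0)) (hlim2 : Tendsto V₂ atTop (𝓝 0)) :
    ∀ y ≥ 0, V₁ y ≤ V₂ y := by
  have hderiv : deriv (V₁ - V₂) = deriv V₁ - deriv V₂ := funext fun y => deriv_sub (hV₁ y) (hV₂ y)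
  have hderiv2 : deriv (deriv (V₁ - V₂)) = deriv (deriv V₁) - deriv (deriv V₂) := by
    rw [hderiv]; exact funext fun y => deriv_sub (hV₁' y) (hV₂' y)
  have hmax := nonpos_on_Ici_of_deriv_deriv_pos (W := V₁ - V₂) (hV₁.continuous.sub hV₂.continuous)
    (sub_nonpos.mpr hb) (by rw [← sub_zero (0 : ℝ)]; exact hlim1.sub hlim2) fun y hy hpos => by
      have hWy : V₂ y < V₁ y := sub_pos.mp hpos
      have hmvt := image_sub_le_mul_sub_of_deriv_le hf hf' (by linarith : u0 + V₂ y ≤ u0 + V₁ y)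
      rw [hderiv2, Pi.sub_apply]
      linarith [heq1 y hy.le, heq2 y hy.le, mul_pos hc (sub_pos.mpr hWy)]
  exact fun y hy => sub_nonpos.mp (hmax y hy)

theorem stmt3_general (f : ℝ → ℝ) (c : ℝ) (hc : 0 < c) (hf : ContDiff ℝ 1 f)
    (hf' : ∀ u, deriv f u ≤ -c) (u0 Vb : ℝ) (V₁ V₂ : ℝ → ℝ)
    (h1 : ContDiff ℝ 2 V₁) (h2 : ContDiff ℝ 2 V₂)
    (heq1 : ∀ y ≥ (0:ℝ), f (u0 + V₁ y) - f u0 + deriv (deriv V₁) y = 0)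
    (heq2 : ∀ y ≥ (0:ℝ), f (u0 + V₂ y) - f u0 + deriv (deriv V₂) y = 0)
    (hb1 : V₁ 0 = Vb) (hb2 : V₂ 0 = Vb)
    (hlim1 : Filter.Tendsto V₁ Filter.atTop (nhds 0))
    (hlim2 : Filter.Tendsto V₂ Filter.atTop (nhds 0)) :
    ∀ y ≥ (0:ℝ), V₁ y = V₂ y := by
  have hfd : Differentiable ℝ f := hf.differentiable one_ne_zero
  have hV₁ : Differentiable ℝ V₁ := h1.differentiable two_ne_zero
  have hV₂ : Differentiable ℝ V₂ := h2.differentiable two_ne_zero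
  have hV₁' : Differentiable ℝ (deriv V₁) := (h1.deriv' (n := 1)).differentiable one_ne_zero
  have hV₂' : Differentiable ℝ (deriv V₂) := (h2.deriv' (n := 1)).differentiable one_ne_zero
  have hb : V₁ 0 = V₂ 0 := hb1.trans hb2.symm
  intro y hy
  exact le_antisymm
    (boundaryLayer_comparison hc hfd hf' u0 hV₁ hV₁' hV₂ hV₂' heq1 heq2 hb.le hlim1 hlim2 y hy)
    (boundaryLayer_comparison hc hfd hf' u0 hV₂ hV₂' hV₁ hV₁' heq2 heq1 hb.ge hlim2 hlim1 y hy)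

theorem stmt3 (f : ℝ → ℝ) (c : ℝ) (hc : 0 < c) (hf : ContDiff ℝ 1 f)
    (hf' : ∀ u, deriv f u ≤ -c) (u0 Vb : ℝ) (V₁ V₂ : ℝ → ℝ)
    (h1 : ContDiff ℝ 2 V₁) (h2 : ContDiff ℝ 2 V₂)
    (heq1 : ∀ y ≥ (0:ℝ), f (u0 + V₁ y) - f u0 + deriv (deriv V₁) y = 0)
    (heq2 : ∀ y ≥ (0:ℝ), f (u0 + V₂ y) - f u0 + deriv (deriv V₂) y = 0)
    (hb1 : V₁ 0 = Vb) (hb2 : V₂ 0 = Vb)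
    (hlim1 : Filter.Tendsto V₁ Filter.atTop (nhds 0))
    (hlim2 : Filter.Tendsto V₂ Filter.atTop (nhds 0))
    (hL2 : MeasureTheory.IntegrableOn (fun y => (V₁ y - V₂ y)^2) (Set.Ioi 0))
    (hL2' : MeasureTheory.IntegrableOn
      (fun y => (deriv V₁ y - deriv V₂ y)^2) (Set.Ioi 0)) :
    ∀ y ≥ (0:ℝ), V₁ y = V₂ y :=
  stmt3_general f c hc hf hf' u0 Vb V₁ V₂ h1 h2 heq1 heq2 hb1 hb2 hlim1 hlim2
end

section
/- Interpolation estimate on the half-line: there is an absolute constant C (one may take C = 3) such that for every smooth compactly supported z : [0,∞) → ℝ, ‖z''‖_{L²(0,∞)} ≤ C ( ‖z'''‖_{H^{-1}(0,∞)} + ‖z'‖_{L²(0,∞)} ), where ‖·‖_{H^{-1}} denotes the dual norm of H¹₀(0,∞). -/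
open Set MeasureTheory
open scoped ContDiff

lemma cs_integral (μ : Measure ℝ) (f g : ℝ → ℝ)
    (hf2 : Integrable (fun x => f x ^ 2) μ) (hg2 : Integrable (fun x => g x ^ 2) μ)
    (hfg : Integrable (fun x => f x * g x) μ) :
    |∫ x, f x * g x ∂μ| ≤ Real.sqrt (∫ x, f x ^ 2 ∂μ) * Real.sqrt (∫ x, g x ^ 2 ∂μ) := by
  set S := ∫ x, f x * g x ∂μ with hS
  set P := ∫ x, f x ^ 2 ∂μ with hP
  set Q := ∫ x, g x ^ 2 ∂μ with hQ
  have hPnn : 0 ≤ P := integral_nonneg fun x => sq_nonneg _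
  have hQnn : 0 ≤ Q := integral_nonneg fun x => sq_nonneg _
  have key : ∀ t : ℝ, 0 ≤ P * (t * t) + (2 * S) * t + Q := by
    intro t
    have e : t ^ 2 * P + ((2 * t) * S + Q)
        = ∫ x, (t ^ 2 * f x ^ 2 + ((2 * t) * (f x * g x) + g x ^ 2)) ∂μ := by
      have hA : Integrable (fun x => t ^ 2 * f x ^ 2) μ := hf2.const_mul _
      have hB : Integrable (fun x => (2 * t) * (f x * g x)) μ := hfg.const_mul _
      have hBC : Integrable (fun x => (2 * t) * (f x * g x) + g x ^ 2) μ := hB.add hg2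
      rw [integral_add hA hBC, integral_add hB hg2, integral_const_mul, integral_const_mul]
    have h2 : 0 ≤ ∫ x, (t ^ 2 * f x ^ 2 + ((2 * t) * (f x * g x) + g x ^ 2)) ∂μ :=
      integral_nonneg fun x => by
        have := sq_nonneg (t * f x + g x); dsimp; nlinarith
    nlinarith [e.symm ▸ h2]
  have hd := discrim_le_zero key
  rw [discrim] at hd
  have hsq : S ^ 2 ≤ P * Q := by nlinarith
  calc |S| = Real.sqrt (S ^ 2) := (Real.sqrt_sq_eq_abs S).symm
    _ ≤ Real.sqrt (P * Q) := Real.sqrt_le_sqrt hsq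
    _ = Real.sqrt P * Real.sqrt Q := Real.sqrt_mul hPnn Q

noncomputable def bv (x : ℝ) : ℝ := max (1 - x ^ 2 / 4) 0
noncomputable def bu (x : ℝ) : ℝ := (bv x) ^ 2
noncomputable def bdu (x : ℝ) : ℝ := -x * bv x

lemma bv_cont : Continuous bv := (continuous_const.sub ((continuous_pow 2).div_const 4)).max continuous_const

lemma bdu_cont : Continuous bdu := (continuous_neg.comp continuous_id).mul bv_cont

lemma bv_nonneg (x : ℝ) : 0 ≤ bv x := le_max_right _ _

lemma bu_zero {x : ℝ} (h : 4 ≤ x ^ 2) : bu x = 0 := by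
  have : bv x = 0 := max_eq_right (by nlinarith)
  simp [bu, this]

lemma bdu_zero {x : ℝ} (h : 4 ≤ x ^ 2) : bdu x = 0 := by
  have : bv x = 0 := max_eq_right (by nlinarith)
  simp [bdu, this]

lemma bu_eq {x : ℝ} (h : x ^ 2 ≤ 4) : bu x = (1 - x ^ 2 / 4) ^ 2 := by
  have : bv x = 1 - x ^ 2 / 4 := max_eq_left (by nlinarith)
  simp [bu, this]

lemma bdu_eq {x : ℝ} (h : x ^ 2 ≤ 4) : bdu x = -x * (1 - x ^ 2 / 4) := by
  have : bv x = 1 - x ^ 2 / 4 := max_eq_left (by nlinarith)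
  simp [bdu, this]

lemma bu_hasDeriv (x : ℝ) : HasDerivAt bu (bdu x) x := by
  rcases lt_trichotomy (1 - x ^ 2 / 4) 0 with h | h | h
  · -- locally zero
    have hev : bu =ᶠ[nhds x] (fun _ => (0:ℝ)) := by
      have : ∀ᶠ y in nhds x, 1 - y ^ 2 / 4 < 0 :=
        (continuous_const.sub ((continuous_pow 2).div_const 4)).continuousAt.eventually_lt
          continuous_const.continuousAt h
      filter_upwards [this] with y hy
      have : bv y = 0 := max_eq_right hy.le
      simp [bu, this]
    have h0 : bdu x = 0 := by
      have : bv x = 0 := max_eq_right h.le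
      simp [bdu, this]
    rw [h0]
    exact (hasDerivAt_const x (0:ℝ)).congr_of_eventuallyEq hev
  · -- boundary: 1 - x^2/4 = 0
    have h0 : bdu x = 0 := by
      have : bv x = 0 := by rw [bv, h]; simp
      simp [bdu, this]
    rw [h0]
    rw [hasDerivAt_iff_tendsto_slope]
    have hg : HasDerivAt (fun y : ℝ => 1 - y ^ 2 / 4) (-x / 2) x := by
      have := ((hasDerivAt_pow 2 x).div_const 4).const_sub 1
      refine this.congr_deriv ?_
      push_cast; ring
    have hgs : Filter.Tendsto (slope (fun y : ℝ => 1 - y ^ 2 / 4) x) (nhdsWithin x {x}ᶜ)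
        (nhds (-x / 2)) := hasDerivAt_iff_tendsto_slope.mp hg
    have hgc : Filter.Tendsto (fun y : ℝ => |1 - y ^ 2 / 4|) (nhdsWithin x {x}ᶜ) (nhds 0) := by
      have : Filter.Tendsto (fun y : ℝ => |1 - y ^ 2 / 4|) (nhds x) (nhds |1 - x ^ 2 / 4|) :=
        ((continuous_const.sub ((continuous_pow 2).div_const 4)).abs).continuousAt
      rw [h, abs_zero] at this
      exact this.mono_left nhdsWithin_le_nhds
    have hprod : Filter.Tendsto
        (fun y : ℝ => |1 - y ^ 2 / 4| * |slope (fun y : ℝ => 1 - y ^ 2 / 4) x y|)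
        (nhdsWithin x {x}ᶜ) (nhds 0) := by
      have := hgc.mul hgs.abs
      simpa using this
    apply squeeze_zero_norm _ hprod
    intro y
    rcases eq_or_ne y x with rfl | hyx
    · simp [slope_def_field]
    · have hbx : bu x = 0 := by
        have : bv x = 0 := by rw [bv, h]; simp
        simp [bu, this]
      rw [slope_def_field, slope_def_field, hbx, h]
      have h1 : bv y ≤ |1 - y ^ 2 / 4| := by
        rw [bv]; rcases le_or_gt (1 - y^2/4) 0 with hc | hc
        · rw [max_eq_right hc]; positivity
        · rw [max_eq_left hc.le]; exact le_abs_self _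
      have hb : bu y ≤ (1 - y ^ 2 / 4) ^ 2 := by
        rw [bu]
        calc bv y ^ 2 ≤ |1 - y ^ 2 / 4| ^ 2 := by
              have := bv_nonneg y; nlinarith
          _ = (1 - y ^ 2 / 4) ^ 2 := sq_abs _
      have hyx' : y - x ≠ 0 := sub_ne_zero.mpr hyx
      have hc : 0 < |y - x| := abs_pos.mpr hyx'
      rw [Real.norm_eq_abs, abs_div, abs_div]
      simp only [sub_zero, ← mul_div_assoc]
      gcongr
      rw [abs_of_nonneg (show (0:ℝ) ≤ bu y from sq_nonneg _)]
      calc bu y ≤ (1 - y ^ 2 / 4) ^ 2 := hb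
        _ = |1 - y ^ 2 / 4| * |1 - y ^ 2 / 4| := by rw [← sq_abs]; ring
  · -- interior: 1 - x^2/4 > 0
    have hev : bu =ᶠ[nhds x] (fun y => (1 - y ^ 2 / 4) ^ 2) := by
      have : ∀ᶠ y in nhds x, 0 < 1 - y ^ 2 / 4 :=
        continuous_const.continuousAt.eventually_lt
          (continuous_const.sub ((continuous_pow 2).div_const 4)).continuousAt h
      filter_upwards [this] with y hy
      have : bv y = 1 - y ^ 2 / 4 := max_eq_left hy.le
      simp [bu, this]
    have hd : HasDerivAt (fun y : ℝ => (1 - y ^ 2 / 4) ^ 2) (bdu x) x := by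
      have hg : HasDerivAt (fun y : ℝ => 1 - y ^ 2 / 4) (-x / 2) x := by
        have := ((hasDerivAt_pow 2 x).div_const 4).const_sub 1
        refine this.congr_deriv ?_
        push_cast; ring
      have := hg.pow 2
      refine this.congr_deriv ?_
      have hbv : bv x = 1 - x ^ 2 / 4 := max_eq_left h.le
      rw [bdu, hbv]; push_cast; ring
    exact hd.congr_of_eventuallyEq hev

lemma bu_cont : Continuous bu := bv_cont.pow 2

lemma bu_compact : HasCompactSupport bu := by
  apply HasCompactSupport.intro (isCompact_Icc : IsCompact (Icc (-2:ℝ) 2))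
  intro x hx
  simp only [mem_Icc, not_and_or, not_le] at hx
  apply bu_zero
  rcases hx with h | h <;> nlinarith

lemma integral_Ioi_eq (f : ℝ → ℝ) (R : ℝ) (hR : 0 ≤ R) (h0 : ∀ x, R ≤ x → f x = 0)
    (hi : IntegrableOn f (Ioi 0)) :
    ∫ x in Ioi (0:ℝ), f x = ∫ x in (0:ℝ)..R, f x := by
  have h2 : ∫ x in Ioi R, f x = 0 :=
    setIntegral_eq_zero_of_forall_eq_zero (fun x hx => h0 x (le_of_lt hx))
  rw [← Ioc_union_Ioi_eq_Ioi hR, setIntegral_union (Ioc_disjoint_Ioi le_rfl) measurableSet_Ioi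
      (hi.mono_set (by rw [← Ioc_union_Ioi_eq_Ioi hR]; exact subset_union_left))
      (hi.mono_set (by rw [← Ioc_union_Ioi_eq_Ioi hR]; exact subset_union_right)),
    h2, intervalIntegral.integral_of_le hR, add_zero]

lemma int_bu_sq : ∫ x in Ioi (0:ℝ), (bu x) ^ 2 = 256 / 315 := by
  rw [integral_Ioi_eq (fun x => bu x ^ 2) 2 (by norm_num) (fun x hx => by rw [bu_zero (by nlinarith)]; ring)
      ((bu_cont.pow 2).integrable_of_hasCompactSupport
        (bu_compact.comp_left (g := fun t : ℝ => t ^ 2) (by norm_num) : HasCompactSupport (fun x => bu x ^ 2))).integrableOn]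
  have hcong : ∀ x ∈ uIcc (0:ℝ) 2, (bu x) ^ 2 = (1 - x ^ 2 / 4) ^ 4 := by
    intro x hx
    rw [uIcc_of_le (by norm_num), mem_Icc] at hx
    rw [bu_eq (by nlinarith)]; ring
  rw [intervalIntegral.integral_congr hcong]
  have hF : ∀ x ∈ uIcc (0:ℝ) 2, HasDerivAt
      (fun y : ℝ => y - y ^ 3 / 3 + 3 * y ^ 5 / 40 - y ^ 7 / 112 + y ^ 9 / 2304)
      ((1 - x ^ 2 / 4) ^ 4) x := by
    intro x _
    have h1 : HasDerivAt (fun y : ℝ => y - y ^ 3 / 3 + 3 * y ^ 5 / 40 - y ^ 7 / 112 + y ^ 9 / 2304)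
        ((1 : ℝ) - (3 : ℕ) * x ^ 2 / 3 + 3 * ((5 : ℕ) * x ^ 4) / 40 - (7 : ℕ) * x ^ 6 / 112
          + (9 : ℕ) * x ^ 8 / 2304) x := by
      exact ((((hasDerivAt_id x).sub ((hasDerivAt_pow 3 x).div_const 3)).add
        (((hasDerivAt_pow 5 x).const_mul 3).div_const 40)).sub
        ((hasDerivAt_pow 7 x).div_const 112)).add ((hasDerivAt_pow 9 x).div_const 2304)
    convert h1 using 1
    push_cast; ring
  rw [intervalIntegral.integral_eq_sub_of_hasDerivAt hF
      (Continuous.intervalIntegrable (by continuity) _ _)]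
  norm_num

lemma bdu_compact : HasCompactSupport bdu := by
  apply HasCompactSupport.intro (isCompact_Icc : IsCompact (Icc (-2:ℝ) 2))
  intro x hx
  simp only [mem_Icc, not_and_or, not_le] at hx
  apply bdu_zero
  rcases hx with h | h <;> nlinarith

lemma int_bdu_sq : ∫ x in Ioi (0:ℝ), (bdu x) ^ 2 = 64 / 105 := by
  rw [integral_Ioi_eq (fun x => bdu x ^ 2) 2 (by norm_num) (fun x hx => by rw [bdu_zero (by nlinarith)]; ring)
      ((bdu_cont.pow 2).integrable_of_hasCompactSupport
        (bdu_compact.comp_left (g := fun t : ℝ => t ^ 2) (by norm_num) : HasCompactSupport (fun x => bdu x ^ 2))).integrableOn]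
  have hcong : ∀ x ∈ uIcc (0:ℝ) 2, (bdu x) ^ 2 = x ^ 2 - x ^ 4 / 2 + x ^ 6 / 16 := by
    intro x hx
    rw [uIcc_of_le (by norm_num), mem_Icc] at hx
    rw [bdu_eq (by nlinarith)]; ring
  rw [intervalIntegral.integral_congr hcong]
  have hF : ∀ x ∈ uIcc (0:ℝ) 2, HasDerivAt
      (fun y : ℝ => y ^ 3 / 3 - y ^ 5 / 10 + y ^ 7 / 112)
      (x ^ 2 - x ^ 4 / 2 + x ^ 6 / 16) x := by
    intro x _
    have h1 : HasDerivAt (fun y : ℝ => y ^ 3 / 3 - y ^ 5 / 10 + y ^ 7 / 112)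
        ((3 : ℕ) * x ^ 2 / 3 - (5 : ℕ) * x ^ 4 / 10 + (7 : ℕ) * x ^ 6 / 112) x :=
      (((hasDerivAt_pow 3 x).div_const 3).sub ((hasDerivAt_pow 5 x).div_const 10)).add
        ((hasDerivAt_pow 7 x).div_const 112)
    convert h1 using 1
    push_cast; ring
  rw [intervalIntegral.integral_eq_sub_of_hasDerivAt hF
      (Continuous.intervalIntegrable (by continuity) _ _)]
  norm_num

lemma final_ineq (A B N c : ℝ) (hA : 0 ≤ A) (hB : 0 ≤ B) (hN : 0 ≤ N) (hc : 0 ≤ c)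
    (hcb : c ^ 2 ≤ 2 * A * B)
    (hmain : A ^ 2 ≤ N * ((B + c) + (A + (4/5) * c)) + (4/5) * c * A) :
    A ≤ 3 * (N + B) := by
  by_contra hcon
  push_neg at hcon
  have h1 : 3 * N ≤ A - 3 * B := by linarith
  have h2 : 15 * A ^ 2 ≤ (5 * (A + B) + 9 * c) * (A - 3 * B) + 12 * c * A := by
    have hp : (0:ℝ) ≤ 5 * (A + B) + 9 * c := by linarith
    nlinarith [mul_le_mul_of_nonneg_left h1 hp]
  have h3 : 10 * A ^ 2 + 10 * A * B + 15 * B ^ 2 + 27 * c * B ≤ 21 * c * A := by nlinarith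
  have hA0 : 0 < A := lt_of_le_of_lt (by positivity) hcon
  nlinarith [sq_nonneg (400 * A - 420 * c - 241 * B), mul_nonneg hB hc, sq_nonneg B,
    mul_pos hA0 hA0, h3, hcb, mul_nonneg hA hc, mul_nonneg hA hB]

set_option maxHeartbeats 1000000 in
theorem stmt16 (z : ℝ → ℝ) (hz : ContDiff ℝ (⊤ : ℕ∞) z) (hsupp : HasCompactSupport z)
    (N : ℝ) (hN : 0 ≤ N)
    (hdual : ∀ φ : ℝ → ℝ, ContDiff ℝ 1 φ → HasCompactSupport φ → φ 0 = 0 →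
      |∫ x in Set.Ioi (0:ℝ), deriv (deriv (deriv z)) x * φ x| ≤
        N * Real.sqrt (∫ x in Set.Ioi (0:ℝ), (φ x ^ 2 + deriv φ x ^ 2))) :
    Real.sqrt (∫ x in Set.Ioi (0:ℝ), deriv (deriv z) x ^ 2) ≤
      3 * (N + Real.sqrt (∫ x in Set.Ioi (0:ℝ), deriv z x ^ 2)) := by
  -- smoothness facts
  have hzi : ContDiff ℝ ∞ z := hz.of_le (by simp)
  have h1 : ContDiff ℝ ∞ (deriv z) := (contDiff_infty_iff_deriv.mp hzi).2
  have h2 : ContDiff ℝ ∞ (deriv (deriv z)) := (contDiff_infty_iff_deriv.mp h1).2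
  have hd2 : Differentiable ℝ (deriv z) := (contDiff_infty_iff_deriv.mp h1).1
  have hd3 : Differentiable ℝ (deriv (deriv z)) := (contDiff_infty_iff_deriv.mp h2).1
  have hc1 : Continuous (deriv z) := h1.continuous
  have hc2 : Continuous (deriv (deriv z)) := h2.continuous
  have hc3 : Continuous (deriv (deriv (deriv z))) := (contDiff_infty_iff_deriv.mp h2).2.continuous
  -- compact supports
  have hs1 : HasCompactSupport (deriv z) := hsupp.deriv
  have hs2 : HasCompactSupport (deriv (deriv z)) := hs1.deriv
  have hs3 : HasCompactSupport (deriv (deriv (deriv z))) := hs2.deriv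
  -- the test function
  set b := deriv z 0 with hbdef
  set φ : ℝ → ℝ := fun x => deriv z x - b * bu x with hφdef
  have hφd : ∀ x, HasDerivAt φ (deriv (deriv z) x - b * bdu x) x := fun x =>
    ((hd2 x).hasDerivAt).sub ((bu_hasDeriv x).const_mul b)
  have hφderiv : deriv φ = fun x => deriv (deriv z) x - b * bdu x :=
    funext fun x => (hφd x).deriv
  have hφ1 : ContDiff ℝ 1 φ := contDiff_one_iff_deriv.mpr
    ⟨fun x => (hφd x).differentiableAt,
     by rw [hφderiv]; exact hc2.sub (continuous_const.mul bdu_cont)⟩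
  have hφs : HasCompactSupport φ := by
    have h := hs1.add (bu_compact.mul_left (f := fun _ => (-b)))
    have e : (deriv z + (fun _ => (-b)) * bu) = φ := by
      funext x; simp only [hφdef, Pi.add_apply, Pi.mul_apply]; ring
    rwa [e] at h
  have hφc : Continuous φ := hc1.sub (continuous_const.mul bu_cont)
  have hφ0 : φ 0 = 0 := by
    have hbu0 : bu 0 = 1 := by simp [bu, bv]
    simp [hφdef, hbu0, hbdef]
  have key := hdual φ hφ1 hφs hφ0
  -- the derivative of φ, as a function
  set ψ : ℝ → ℝ := fun x => deriv (deriv z) x - b * bdu x with hψdef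
  have hψc : Continuous ψ := hc2.sub (continuous_const.mul bdu_cont)
  have hψs : HasCompactSupport ψ := by
    have h := hs2.add (bdu_compact.mul_left (f := fun _ => (-b)))
    have e : (deriv (deriv z) + (fun _ => (-b)) * bdu) = ψ := by
      funext x; simp only [hψdef, Pi.add_apply, Pi.mul_apply]; ring
    rwa [e] at h
  -- choose R
  obtain ⟨r, hr⟩ := (hs1.isCompact.union (hs2.isCompact.union hs3.isCompact)).isBounded.subset_closedBall 0
  set R := max (r + 1) 2 with hRdef
  have hR0 : (0:ℝ) ≤ R := le_trans (by norm_num) (le_max_right _ _)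
  have hR2 : (2:ℝ) ≤ R := le_max_right _ _
  have hnm : ∀ x, R ≤ x → x ∉ Metric.closedBall (0:ℝ) r := by
    intro x hx hmem
    simp only [Metric.mem_closedBall, Real.dist_eq, sub_zero] at hmem
    have h1 : r + 1 ≤ x := le_trans (le_max_left _ _) hx
    have h2 : x ≤ |x| := le_abs_self x
    linarith [hmem, h1, h2]
  have hz1R : ∀ x, R ≤ x → deriv z x = 0 := fun x hx =>
    image_eq_zero_of_notMem_tsupport (fun hmem => hnm x hx (hr (mem_union_left _ hmem)))
  have hz2R : ∀ x, R ≤ x → deriv (deriv z) x = 0 := fun x hx =>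
    image_eq_zero_of_notMem_tsupport
      (fun hmem => hnm x hx (hr (mem_union_right _ (mem_union_left _ hmem))))
  have hz3R : ∀ x, R ≤ x → deriv (deriv (deriv z)) x = 0 := fun x hx =>
    image_eq_zero_of_notMem_tsupport
      (fun hmem => hnm x hx (hr (mem_union_right _ (mem_union_right _ hmem))))
  have hbuR : ∀ x, R ≤ x → bu x = 0 := fun x hx => bu_zero (by nlinarith [hR2.trans hx])
  have hbduR : ∀ x, R ≤ x → bdu x = 0 := fun x hx => bdu_zero (by nlinarith [hR2.trans hx])
  have hφR : ∀ x, R ≤ x → φ x = 0 := fun x hx => by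
    simp [hφdef, hz1R x hx, hbuR x hx]
  have hψR : ∀ x, R ≤ x → ψ x = 0 := fun x hx => by
    simp [hψdef, hz2R x hx, hbduR x hx]
  -- conversion of Ioi-integrals to interval integrals
  have conv : ∀ f : ℝ → ℝ, Continuous f → HasCompactSupport f → (∀ x, R ≤ x → f x = 0) →
      ∫ x in Ioi (0:ℝ), f x = ∫ x in (0:ℝ)..R, f x := fun f hc hs h0 =>
    integral_Ioi_eq f R hR0 h0 (hc.integrable_of_hasCompactSupport hs).integrableOn
  have intg : ∀ f : ℝ → ℝ, Continuous f → HasCompactSupport f →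
      Integrable f (volume.restrict (Ioi 0)) := fun f hc hs =>
    (hc.integrable_of_hasCompactSupport hs).restrict
  -- integration by parts : ∫ z''' φ = - ∫ z'' ψ
  have hz3φc : Continuous (fun x => deriv (deriv (deriv z)) x * φ x) := hc3.mul hφc
  have hz3φs : HasCompactSupport (fun x => deriv (deriv (deriv z)) x * φ x) := hs3.mul_right
  have hz2ψc : Continuous (fun x => deriv (deriv z) x * ψ x) := hc2.mul hψc
  have hz2ψs : HasCompactSupport (fun x => deriv (deriv z) x * ψ x) := hs2.mul_right
  have hparts : ∫ x in Ioi (0:ℝ), deriv (deriv (deriv z)) x * φ x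
      = - ∫ x in Ioi (0:ℝ), deriv (deriv z) x * ψ x := by
    have hF : ∀ x, HasDerivAt (fun y => deriv (deriv z) y * φ y)
        (deriv (deriv (deriv z)) x * φ x + deriv (deriv z) x * ψ x) x := fun x =>
      (hd3 x).hasDerivAt.mul (hφd x)
    have hsum : (∫ x in (0:ℝ)..R, (deriv (deriv (deriv z)) x * φ x
        + deriv (deriv z) x * ψ x)) = 0 := by
      rw [intervalIntegral.integral_eq_sub_of_hasDerivAt (fun x _ => hF x)
          ((hz3φc.add hz2ψc).intervalIntegrable _ _)]
      rw [hz2R R le_rfl, hφ0]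
      ring
    rw [intervalIntegral.integral_add (hz3φc.intervalIntegrable _ _)
        (hz2ψc.intervalIntegrable _ _)] at hsum
    rw [conv _ hz3φc hz3φs (fun x hx => by rw [hz3R x hx]; ring),
        conv _ hz2ψc hz2ψs (fun x hx => by rw [hψR x hx]; ring)]
    linarith
  -- b^2 = -2 ∫ z' z''
  have hb2 : b ^ 2 = -2 * ∫ x in Ioi (0:ℝ), deriv z x * deriv (deriv z) x := by
    have hF : ∀ x, HasDerivAt (fun y => deriv z y ^ 2) (2 * (deriv z x * deriv (deriv z) x)) x := by
      intro x
      have h := ((hd2 x).hasDerivAt (f := deriv z)).pow 2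
      refine h.congr_deriv ?_
      push_cast; ring
    have hcont : Continuous (fun x => 2 * (deriv z x * deriv (deriv z) x)) :=
      continuous_const.mul (hc1.mul hc2)
    have hcs : HasCompactSupport (fun x => deriv z x * deriv (deriv z) x) := hs1.mul_right
    have := intervalIntegral.integral_eq_sub_of_hasDerivAt (fun x (_ : x ∈ uIcc (0:ℝ) R) => hF x)
      (hcont.intervalIntegrable _ _)
    rw [hz1R R le_rfl] at this
    rw [conv (fun x => deriv z x * deriv (deriv z) x) (hc1.mul hc2) hcs (fun x hx => by rw [hz1R x hx]; ring)]
    rw [intervalIntegral.integral_const_mul] at this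
    rw [← hbdef] at this
    nlinarith [this]
  -- quantities
  set PA := ∫ x in Ioi (0:ℝ), deriv (deriv z) x ^ 2 with hPA
  set PB := ∫ x in Ioi (0:ℝ), deriv z x ^ 2 with hPB
  have hPAnn : 0 ≤ PA := setIntegral_nonneg measurableSet_Ioi (fun x _ => sq_nonneg _)
  have hPBnn : 0 ≤ PB := setIntegral_nonneg measurableSet_Ioi (fun x _ => sq_nonneg _)
  set A := Real.sqrt PA with hA
  set B := Real.sqrt PB with hB
  have hA2 : A ^ 2 = PA := Real.sq_sqrt hPAnn
  have hB2 : B ^ 2 = PB := Real.sq_sqrt hPBnn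
  have hAnn : 0 ≤ A := Real.sqrt_nonneg _
  have hBnn : 0 ≤ B := Real.sqrt_nonneg _
  set c := |b| with hcdef
  have hcnn : 0 ≤ c := abs_nonneg _
  -- integrability
  have iz1sq : Integrable (fun x => deriv z x ^ 2) (volume.restrict (Ioi 0)) :=
    intg _ (hc1.pow 2) (hs1.comp_left (g := fun t => t ^ 2) (by norm_num))
  have iz2sq : Integrable (fun x => deriv (deriv z) x ^ 2) (volume.restrict (Ioi 0)) :=
    intg _ (hc2.pow 2) (hs2.comp_left (g := fun t => t ^ 2) (by norm_num))
  have ibu2 : Integrable (fun x => bu x ^ 2) (volume.restrict (Ioi 0)) :=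
    intg _ (bu_cont.pow 2) (bu_compact.comp_left (g := fun t => t ^ 2) (by norm_num))
  have ibdu2 : Integrable (fun x => bdu x ^ 2) (volume.restrict (Ioi 0)) :=
    intg _ (bdu_cont.pow 2) (bdu_compact.comp_left (g := fun t => t ^ 2) (by norm_num))
  have iz1bu : Integrable (fun x => deriv z x * bu x) (volume.restrict (Ioi 0)) :=
    intg _ (hc1.mul bu_cont) hs1.mul_right
  have iz2bdu : Integrable (fun x => deriv (deriv z) x * bdu x) (volume.restrict (Ioi 0)) :=
    intg _ (hc2.mul bdu_cont) hs2.mul_right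
  have iz1z2 : Integrable (fun x => deriv z x * deriv (deriv z) x) (volume.restrict (Ioi 0)) :=
    intg _ (hc1.mul hc2) hs1.mul_right
  have iφ2 : Integrable (fun x => φ x ^ 2) (volume.restrict (Ioi 0)) :=
    intg _ (hφc.pow 2) (hφs.comp_left (g := fun t => t ^ 2) (by norm_num))
  have iψ2 : Integrable (fun x => ψ x ^ 2) (volume.restrict (Ioi 0)) :=
    intg _ (hψc.pow 2) (hψs.comp_left (g := fun t => t ^ 2) (by norm_num))
  have iz2ψ : Integrable (fun x => deriv (deriv z) x * ψ x) (volume.restrict (Ioi 0)) :=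
    intg _ hz2ψc hz2ψs
  -- expansions
  have hφsq : (∫ x in Ioi (0:ℝ), φ x ^ 2)
      = PB + (-(2 * b) * (∫ x in Ioi (0:ℝ), deriv z x * bu x) + b ^ 2 * (256 / 315)) := by
    have e : ∀ x, φ x ^ 2
        = deriv z x ^ 2 + (-(2 * b) * (deriv z x * bu x) + b ^ 2 * bu x ^ 2) := by
      intro x; simp only [hφdef]; ring
    simp only [e]
    have i1 : Integrable (fun x => -(2 * b) * (deriv z x * bu x)) (volume.restrict (Ioi 0)) :=
      iz1bu.const_mul _
    have i2 : Integrable (fun x => b ^ 2 * bu x ^ 2) (volume.restrict (Ioi 0)) :=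
      ibu2.const_mul _
    have i12 : Integrable (fun x => -(2 * b) * (deriv z x * bu x) + b ^ 2 * bu x ^ 2)
        (volume.restrict (Ioi 0)) := i1.add i2
    rw [integral_add iz1sq i12, integral_add i1 i2, integral_const_mul,
      integral_const_mul, int_bu_sq]
  have hψsq : (∫ x in Ioi (0:ℝ), ψ x ^ 2)
      = PA + (-(2 * b) * (∫ x in Ioi (0:ℝ), deriv (deriv z) x * bdu x)
        + b ^ 2 * (64 / 105)) := by
    have e : ∀ x, ψ x ^ 2
        = deriv (deriv z) x ^ 2 + (-(2 * b) * (deriv (deriv z) x * bdu x)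
          + b ^ 2 * bdu x ^ 2) := by
      intro x; simp only [hψdef]; ring
    simp only [e]
    have i1 : Integrable (fun x => -(2 * b) * (deriv (deriv z) x * bdu x))
        (volume.restrict (Ioi 0)) := iz2bdu.const_mul _
    have i2 : Integrable (fun x => b ^ 2 * bdu x ^ 2) (volume.restrict (Ioi 0)) :=
      ibdu2.const_mul _
    have i12 : Integrable (fun x => -(2 * b) * (deriv (deriv z) x * bdu x) + b ^ 2 * bdu x ^ 2)
        (volume.restrict (Ioi 0)) := i1.add i2
    rw [integral_add iz2sq i12, integral_add i1 i2, integral_const_mul,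
      integral_const_mul, int_bdu_sq]
  -- decomposition of PA
  have hdecomp : PA = (∫ x in Ioi (0:ℝ), deriv (deriv z) x * ψ x)
      + b * (∫ x in Ioi (0:ℝ), deriv (deriv z) x * bdu x) := by
    have e : ∀ x, deriv (deriv z) x ^ 2
        = deriv (deriv z) x * ψ x + b * (deriv (deriv z) x * bdu x) := by
      intro x; simp only [hψdef]; ring
    have i2 : Integrable (fun x => b * (deriv (deriv z) x * bdu x))
        (volume.restrict (Ioi 0)) := iz2bdu.const_mul _
    rw [hPA]
    simp only [e]
    rw [integral_add iz2ψ i2, integral_const_mul]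
  -- Cauchy-Schwarz bounds
  have hcsAB : |∫ x in Ioi (0:ℝ), deriv z x * deriv (deriv z) x| ≤ B * A :=
    cs_integral (volume.restrict (Ioi 0)) (deriv z) (deriv (deriv z)) iz1sq iz2sq iz1z2
  have hcb : c ^ 2 ≤ 2 * A * B := by
    have h1 : b ^ 2 ≤ 2 * (B * A) := by
      rw [hb2]
      have h2 := neg_abs_le (∫ x in Ioi (0:ℝ), deriv z x * deriv (deriv z) x)
      nlinarith [hcsAB, h2]
    calc c ^ 2 = b ^ 2 := sq_abs b
      _ ≤ 2 * (B * A) := h1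
      _ = 2 * A * B := by ring
  have hp : |∫ x in Ioi (0:ℝ), deriv z x * bu x| ≤ B * 1 := by
    have h := cs_integral (volume.restrict (Ioi 0)) (deriv z) bu iz1sq ibu2 iz1bu
    have h2 : Real.sqrt (∫ x in Ioi (0:ℝ), bu x ^ 2) ≤ 1 := by
      rw [int_bu_sq]
      calc Real.sqrt (256 / 315) ≤ Real.sqrt 1 := Real.sqrt_le_sqrt (by norm_num)
        _ = 1 := Real.sqrt_one
    exact h.trans (mul_le_mul_of_nonneg_left h2 hBnn)
  have hq : |∫ x in Ioi (0:ℝ), deriv (deriv z) x * bdu x| ≤ A * (4 / 5) := by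
    have h := cs_integral (volume.restrict (Ioi 0)) (deriv (deriv z)) bdu iz2sq ibdu2 iz2bdu
    have h2 : Real.sqrt (∫ x in Ioi (0:ℝ), bdu x ^ 2) ≤ 4 / 5 := by
      rw [int_bdu_sq]
      calc Real.sqrt (64 / 105) ≤ Real.sqrt ((4 / 5) ^ 2) := Real.sqrt_le_sqrt (by norm_num)
        _ = 4 / 5 := Real.sqrt_sq (by norm_num)
    exact h.trans (mul_le_mul_of_nonneg_left h2 hAnn)
  -- bounds on the H¹ norm of φ
  have hφb : (∫ x in Ioi (0:ℝ), φ x ^ 2) ≤ (B + c) ^ 2 := by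
    rw [hφsq]
    have h1 : -(2 * b) * (∫ x in Ioi (0:ℝ), deriv z x * bu x) ≤ 2 * c * (B * 1) := by
      have h2 := neg_abs_le (b * (∫ x in Ioi (0:ℝ), deriv z x * bu x))
      have h3 := abs_mul b (∫ x in Ioi (0:ℝ), deriv z x * bu x)
      nlinarith [mul_le_mul_of_nonneg_left hp hcnn]
    have h4 : b ^ 2 * (256 / 315) ≤ c ^ 2 := by
      rw [← sq_abs b, ← hcdef]; nlinarith [sq_nonneg c]
    nlinarith [hB2]
  have hψb : (∫ x in Ioi (0:ℝ), ψ x ^ 2) ≤ (A + (4 / 5) * c) ^ 2 := by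
    rw [hψsq]
    have h1 : -(2 * b) * (∫ x in Ioi (0:ℝ), deriv (deriv z) x * bdu x)
        ≤ 2 * c * (A * (4 / 5)) := by
      have h2 := neg_abs_le (b * (∫ x in Ioi (0:ℝ), deriv (deriv z) x * bdu x))
      have h3 := abs_mul b (∫ x in Ioi (0:ℝ), deriv (deriv z) x * bdu x)
      nlinarith [mul_le_mul_of_nonneg_left hq hcnn]
    have h4 : b ^ 2 * (64 / 105) ≤ (16 / 25) * c ^ 2 := by
      rw [← sq_abs b, ← hcdef]; nlinarith [sq_nonneg c]
    nlinarith [hA2]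
  -- the dual bound
  have hsqrt : Real.sqrt (∫ x in Ioi (0:ℝ), (φ x ^ 2 + deriv φ x ^ 2))
      ≤ (B + c) + (A + (4 / 5) * c) := by
    have hsum : (∫ x in Ioi (0:ℝ), (φ x ^ 2 + deriv φ x ^ 2))
        = (∫ x in Ioi (0:ℝ), φ x ^ 2) + (∫ x in Ioi (0:ℝ), ψ x ^ 2) := by
      rw [hφderiv]
      exact integral_add iφ2 iψ2
    have hle : (∫ x in Ioi (0:ℝ), (φ x ^ 2 + deriv φ x ^ 2))
        ≤ ((B + c) + (A + (4 / 5) * c)) ^ 2 := by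
      rw [hsum]
      nlinarith [hφb, hψb, mul_nonneg (add_nonneg hBnn hcnn)
        (add_nonneg hAnn (by linarith : (0:ℝ) ≤ (4 / 5) * c))]
    calc Real.sqrt (∫ x in Ioi (0:ℝ), (φ x ^ 2 + deriv φ x ^ 2))
        ≤ Real.sqrt (((B + c) + (A + (4 / 5) * c)) ^ 2) := Real.sqrt_le_sqrt hle
      _ = (B + c) + (A + (4 / 5) * c) := Real.sqrt_sq (by linarith)
  have hmain : PA ≤ N * ((B + c) + (A + (4 / 5) * c)) + (4 / 5) * c * A := by
    have h1 : |∫ x in Ioi (0:ℝ), deriv (deriv (deriv z)) x * φ x|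
        ≤ N * ((B + c) + (A + (4 / 5) * c)) :=
      key.trans (mul_le_mul_of_nonneg_left hsqrt hN)
    have h2 : |∫ x in Ioi (0:ℝ), deriv (deriv z) x * ψ x|
        = |∫ x in Ioi (0:ℝ), deriv (deriv (deriv z)) x * φ x| := by
      rw [hparts, abs_neg]
    have h3 : (∫ x in Ioi (0:ℝ), deriv (deriv z) x * ψ x)
        ≤ N * ((B + c) + (A + (4 / 5) * c)) := by
      calc (∫ x in Ioi (0:ℝ), deriv (deriv z) x * ψ x)
          ≤ |∫ x in Ioi (0:ℝ), deriv (deriv z) x * ψ x| := le_abs_self _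
        _ = _ := h2
        _ ≤ _ := h1
    have h4 : b * (∫ x in Ioi (0:ℝ), deriv (deriv z) x * bdu x) ≤ c * (A * (4 / 5)) := by
      calc b * (∫ x in Ioi (0:ℝ), deriv (deriv z) x * bdu x)
          ≤ |b * (∫ x in Ioi (0:ℝ), deriv (deriv z) x * bdu x)| := le_abs_self _
        _ = c * |∫ x in Ioi (0:ℝ), deriv (deriv z) x * bdu x| := by rw [abs_mul]
        _ ≤ c * (A * (4 / 5)) := mul_le_mul_of_nonneg_left hq hcnn
    calc PA = (∫ x in Ioi (0:ℝ), deriv (deriv z) x * ψ x)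
          + b * (∫ x in Ioi (0:ℝ), deriv (deriv z) x * bdu x) := hdecomp
      _ ≤ N * ((B + c) + (A + (4 / 5) * c)) + c * (A * (4 / 5)) := add_le_add h3 h4
      _ = N * ((B + c) + (A + (4 / 5) * c)) + (4 / 5) * c * A := by ring
  exact final_ineq A B N c hAnn hBnn hN hcnn hcb (by rw [hA2]; exact hmain)
end
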